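/- Let D_q be the quantum torus with q not a root of unity and let s act on D_q by s(X) = X^{-1}, s(P) = P^{-1}. Consider the twisted trace space HH_0(D_q, sD_q) = D_q / span{ s(a)b - ba : a, b ∈ D_q }. This space is 4-dimensional, spanned by the classes of the monomials X^{ε_1} P^{ε_2} with ε_1, ε_2 ∈ {0,1}. -/

import Mathlib

/-- Relations presenting the quantum torus `D_q = ℂ⟨X^{±1}, P^{±1}⟩ / (PX = qXP)`:
generators `0 ↦ X`, `1 ↦ X⁻¹`, `2 ↦ P`, `3 ↦ P⁻¹`. -/
inductive QTRel (q : ℂ) : FreeAlgebra ℂ (Fin 4) → FreeAlgebra ℂ (Fin 4) → Prop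
  | x_xinv : QTRel q (FreeAlgebra.ι ℂ 0 * FreeAlgebra.ι ℂ 1) 1
  | xinv_x : QTRel q (FreeAlgebra.ι ℂ 1 * FreeAlgebra.ι ℂ 0) 1
  | p_pinv : QTRel q (FreeAlgebra.ι ℂ 2 * FreeAlgebra.ι ℂ 3) 1
  | pinv_p : QTRel q (FreeAlgebra.ι ℂ 3 * FreeAlgebra.ι ℂ 2) 1
  | px_qxp : QTRel q (FreeAlgebra.ι ℂ 2 * FreeAlgebra.ι ℂ 0)
      (q • (FreeAlgebra.ι ℂ 0 * FreeAlgebra.ι ℂ 2))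

/-- The quantum torus algebra `D_q`. -/
abbrev QTorus (q : ℂ) := RingQuot (QTRel q)

noncomputable def Xgen (q : ℂ) : QTorus q := RingQuot.mkAlgHom ℂ (QTRel q) (FreeAlgebra.ι ℂ 0)
noncomputable def XgenInv (q : ℂ) : QTorus q := RingQuot.mkAlgHom ℂ (QTRel q) (FreeAlgebra.ι ℂ 1)
noncomputable def Pgen (q : ℂ) : QTorus q := RingQuot.mkAlgHom ℂ (QTRel q) (FreeAlgebra.ι ℂ 2)
noncomputable def PgenInv (q : ℂ) : QTorus q := RingQuot.mkAlgHom ℂ (QTRel q) (FreeAlgebra.ι ℂ 3)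

/-- The subspace of `D_q` spanned by the elements `X⁻¹zX⁻¹ - z` and `P⁻¹zP⁻¹ - z`,
i.e. by `s(a)b - ba` for the involution `s : X ↦ X⁻¹, P ↦ P⁻¹`; the quotient by it is
the twisted trace space `HH₀(D_q, sD_q)`. -/
noncomputable def twistedCommSpace (q : ℂ) : Submodule ℂ (QTorus q) :=
  Submodule.span ℂ
    ({x | ∃ z : QTorus q, x = XgenInv q * z * XgenInv q - z} ∪
     {x | ∃ z : QTorus q, x = PgenInv q * z * PgenInv q - z})

/-!
The twisted commutators `X⁻¹zX⁻¹ - z` and `P⁻¹zP⁻¹ - z` identify `X^(k+2) P^l` with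
`q^(-l) X^k P^l` and `X^k P^(l+2)` with `q^(-k) X^k P^l`, so every monomial `X^k P^l` is
congruent to `q^e X^(k mod 2) P^(l mod 2)` for an explicit exponent `e = reductionExp k l`.
Conversely, `D_q` acts on `ℤ × ℤ →₀ ℂ` as on its own monomial basis (`X` a shift, `P` a
`q`-weighted shift), so applying an element to `δ_(0,0)` reads off its coefficients, and sending
`X^k P^l` to `q^e δ_(k mod 2, l mod 2)` gives a well-defined linear map. It is invariant under
both sandwiches, hence kills all twisted commutators, and maps `1, X, P, XP` to four distinct
basis vectors.
-/

theorem ext_int_of_add_one {α : Type*} {f g : ℤ → α} {T : α → α}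
    (hT : Function.Injective T) (hf : ∀ n, f (n + 1) = T (f n))
    (hg : ∀ n, g (n + 1) = T (g n)) (h₀ : f 0 = g 0) :
    f = g := by
  funext n
  induction n using Int.induction_on with
  | zero => exact h₀
  | succ n ih => rw [hf, hg, ih]
  | pred n ih =>
    apply hT
    rw [← hf, ← hg, sub_add_cancel]
    exact ih

theorem eq_zpow_smul_of_add_one {K M : Type*} [DivisionRing K] [AddCommGroup M] [Module K M]
    {c : K} (hc : c ≠ 0) {f : ℤ → M} (hf : ∀ n, f (n + 1) = c • f n) (n : ℤ) :
    f n = c ^ n • f 0 := by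
  have := ext_int_of_add_one (g := fun n => c ^ n • f 0) (smul_right_injective M hc) hf
    (fun n => by rw [add_comm, zpow_one_add₀ hc, mul_smul])
    (by rw [zpow_zero, one_smul])
  exact congrFun this n

theorem zpow_mul_of_mul_eq_mul_mul {G : Type*} [Group G] {a b c : G}
    (hc : c ∈ Subgroup.center G) (h : a * b = c * b * a) (n : ℤ) :
    a ^ n * b = c ^ n * b * a ^ n := by
  have hconj : MulAut.conj b⁻¹ a = c * a := by
    rw [MulAut.conj_apply, inv_inv, mul_assoc, h, ← Subgroup.mem_center_iff.mp hc b]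
    group
  have hca : Commute c a := (Subgroup.mem_center_iff.mp hc a).symm
  have key : b⁻¹ * a ^ n * b = c ^ n * a ^ n := by
    have := map_zpow (MulAut.conj b⁻¹) a n
    rwa [hconj, hca.mul_zpow, MulAut.conj_apply, inv_inv] at this
  calc a ^ n * b = b * (b⁻¹ * a ^ n * b) := by group
    _ = c ^ n * b * a ^ n := by
      rw [key, ← mul_assoc, Subgroup.mem_center_iff.mp (Subgroup.zpow_mem _ hc n) b]

theorem mul_zpow_of_mul_eq_mul_mul {G : Type*} [Group G] {a b c : G}
    (hc : c ∈ Subgroup.center G) (h : a * b = c * b * a) (n : ℤ) :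
    a * b ^ n = c ^ n * b ^ n * a := by
  have hcb : Commute c b := (Subgroup.mem_center_iff.mp hc b).symm
  have key : a * b ^ n * a⁻¹ = c ^ n * b ^ n := by
    have := map_zpow (MulAut.conj a) b n
    rwa [MulAut.conj_apply, MulAut.conj_apply, h, mul_inv_cancel_right, hcb.mul_zpow] at this
  rw [← key, inv_mul_cancel_right]

theorem zpow_mul_zpow_of_mul_eq_mul_mul {G : Type*} [Group G] {a b c : G}
    (hc : c ∈ Subgroup.center G) (h : a * b = c * b * a) (m n : ℤ) :
    a ^ m * b ^ n = c ^ (m * n) * b ^ n * a ^ m := by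
  rw [mul_zpow_of_mul_eq_mul_mul (Subgroup.zpow_mem _ hc m)
    (zpow_mul_of_mul_eq_mul_mul hc h m) n, zpow_mul]

noncomputable def weightedShift {R ι : Type*} [CommSemiring R] [Add ι] (c : ι → R) (v : ι) :
    Module.End R (ι →₀ R) :=
  Finsupp.lsum R fun p => c p • Finsupp.lsingle (p + v)

theorem weightedShift_single {R ι : Type*} [CommSemiring R] [Add ι] (c : ι → R) (v p : ι)
    (a : R) :
    weightedShift c v (Finsupp.single p a) = Finsupp.single (p + v) (c p * a) := by
  simp [weightedShift]

namespace QTorus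

variable {q : ℂ}

section Relations

variable (q)

theorem Xgen_mul_XgenInv : Xgen q * XgenInv q = 1 := by
  simpa [Xgen, XgenInv] using RingQuot.mkAlgHom_rel ℂ (QTRel.x_xinv (q := q))

theorem XgenInv_mul_Xgen : XgenInv q * Xgen q = 1 := by
  simpa [Xgen, XgenInv] using RingQuot.mkAlgHom_rel ℂ (QTRel.xinv_x (q := q))

theorem Pgen_mul_PgenInv : Pgen q * PgenInv q = 1 := by
  simpa [Pgen, PgenInv] using RingQuot.mkAlgHom_rel ℂ (QTRel.p_pinv (q := q))

theorem PgenInv_mul_Pgen : PgenInv q * Pgen q = 1 := by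
  simpa [Pgen, PgenInv] using RingQuot.mkAlgHom_rel ℂ (QTRel.pinv_p (q := q))

theorem Pgen_mul_Xgen : Pgen q * Xgen q = q • (Xgen q * Pgen q) := by
  simpa [Pgen, Xgen] using RingQuot.mkAlgHom_rel ℂ (QTRel.px_qxp (q := q))

noncomputable def unitX : (QTorus q)ˣ :=
  ⟨Xgen q, XgenInv q, Xgen_mul_XgenInv q, XgenInv_mul_Xgen q⟩

noncomputable def unitP : (QTorus q)ˣ :=
  ⟨Pgen q, PgenInv q, Pgen_mul_PgenInv q, PgenInv_mul_Pgen q⟩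

noncomputable def mon (k l : ℤ) : QTorus q := ↑(unitX q ^ k * unitP q ^ l)

end Relations

noncomputable def unitScalar (hq : q ≠ 0) : (QTorus q)ˣ :=
  Units.map (algebraMap ℂ (QTorus q)) (Units.mk0 q hq)

theorem unitScalar_mem_center (hq : q ≠ 0) : unitScalar hq ∈ Subgroup.center (QTorus q)ˣ :=
  Subgroup.mem_center_iff.mpr fun _ => Units.ext (Algebra.commutes _ _).symm

theorem val_unitScalar_zpow (hq : q ≠ 0) (n : ℤ) :
    ((unitScalar hq ^ n : (QTorus q)ˣ) : QTorus q) = algebraMap ℂ (QTorus q) (q ^ n) := by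
  rw [unitScalar, ← map_zpow, Units.coe_map, MonoidHom.coe_coe, Units.val_zpow_eq_zpow_val,
    Units.val_mk0]

theorem unitP_mul_unitX (hq : q ≠ 0) : unitP q * unitX q = unitScalar hq * unitX q * unitP q :=
  Units.ext <| by
    rw [Units.val_mul, Units.val_mul, Units.val_mul, unitScalar, Units.coe_map,
      MonoidHom.coe_coe, Units.val_mk0, mul_assoc, ← Algebra.smul_def]
    exact Pgen_mul_Xgen q

theorem mon_mul (hq : q ≠ 0) (k l k' l' : ℤ) :
    mon q k l * mon q k' l' = q ^ (l * k') • mon q (k + k') (l + l') := by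
  have hcomm :=
    zpow_mul_zpow_of_mul_eq_mul_mul (unitScalar_mem_center hq) (unitP_mul_unitX hq) l k'
  have hcentral :=
    Subgroup.mem_center_iff.mp (Subgroup.zpow_mem _ (unitScalar_mem_center hq) (l * k'))
  rw [mon, mon, mon, ← Units.val_mul, Algebra.smul_def, ← val_unitScalar_zpow hq,
    ← Units.val_mul]
  congr 1
  calc unitX q ^ k * unitP q ^ l * (unitX q ^ k' * unitP q ^ l')
      = unitX q ^ k * (unitP q ^ l * unitX q ^ k') * unitP q ^ l' := by group
    _ = unitScalar hq ^ (l * k') * (unitX q ^ (k + k') * unitP q ^ (l + l')) := by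
      rw [hcomm, mul_assoc (unitScalar hq ^ (l * k')), ← mul_assoc (unitX q ^ k), hcentral]
      group

@[simp] theorem mon_zero_zero : mon q 0 0 = 1 := by simp [mon]
@[simp] theorem mon_one_zero : mon q 1 0 = Xgen q := by simp [mon, unitX]
@[simp] theorem mon_zero_one : mon q 0 1 = Pgen q := by simp [mon, unitP]
@[simp] theorem mon_one_one : mon q 1 1 = Xgen q * Pgen q := by simp [mon, unitX, unitP]
@[simp] theorem mon_neg_one_zero : mon q (-1) 0 = XgenInv q := by simp [mon, unitX]
@[simp] theorem mon_zero_neg_one : mon q 0 (-1) = PgenInv q := by simp [mon, unitP]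

theorem XgenInv_mul_mon_mul_XgenInv (hq : q ≠ 0) (k l : ℤ) :
    XgenInv q * mon q k l * XgenInv q = q ^ (-l) • mon q (k - 2) l := by
  rw [← mon_neg_one_zero, mon_mul hq, smul_mul_assoc, mon_mul hq, smul_smul, ← zpow_add₀ hq]
  congr 2 <;> ring

theorem PgenInv_mul_mon_mul_PgenInv (hq : q ≠ 0) (k l : ℤ) :
    PgenInv q * mon q k l * PgenInv q = q ^ (-k) • mon q k (l - 2) := by
  rw [← mon_zero_neg_one, mon_mul hq, smul_mul_assoc, mon_mul hq, smul_smul, ← zpow_add₀ hq]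
  congr 2 <;> ring

theorem Xgen_mul_mon (hq : q ≠ 0) (k l : ℤ) : Xgen q * mon q k l = mon q (k + 1) l := by
  rw [← mon_one_zero, mon_mul hq, zero_mul, zpow_zero, one_smul, add_comm 1, zero_add]

theorem Pgen_mul_mon (hq : q ≠ 0) (k l : ℤ) :
    Pgen q * mon q k l = q ^ k • mon q k (l + 1) := by
  rw [← mon_zero_one, mon_mul hq, one_mul, zero_add, add_comm 1]

theorem span_range_mon (hq : q ≠ 0) :
    Submodule.span ℂ (Set.range fun p : ℤ × ℤ => mon q p.1 p.2) = ⊤ := by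
  set M := Submodule.span ℂ (Set.range fun p : ℤ × ℤ => mon q p.1 p.2)
  have mon_mem (k l : ℤ) : mon q k l ∈ M := Submodule.subset_span ⟨(k, l), rfl⟩
  have mul_mem {x y : QTorus q} (hx : x ∈ M) (hy : y ∈ M) : x * y ∈ M := by
    refine Submodule.mul_le.mp ?_ x hx y hy
    rw [Submodule.span_mul_span, Submodule.span_le]
    rintro _ ⟨_, ⟨p, rfl⟩, _, ⟨p', rfl⟩, rfl⟩
    change mon q p.1 p.2 * mon q p'.1 p'.2 ∈ M
    rw [mon_mul hq]
    exact M.smul_mem _ (mon_mem _ _)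
  rw [eq_top_iff]
  rintro x -
  obtain ⟨y, rfl⟩ := RingQuot.mkAlgHom_surjective ℂ (QTRel q) x
  induction y using FreeAlgebra.induction with
  | grade0 r =>
    rw [AlgHom.commutes, Algebra.algebraMap_eq_smul_one, ← mon_zero_zero]
    exact M.smul_mem _ (mon_mem _ _)
  | grade1 i =>
    fin_cases i
    · simpa [Xgen] using mon_mem 1 0
    · simpa [XgenInv] using mon_mem (-1) 0
    · simpa [Pgen] using mon_mem 0 1
    · simpa [PgenInv] using mon_mem 0 (-1)
  | mul a b ha hb => rw [map_mul]; exact mul_mem ha hb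
  | add a b ha hb => rw [map_add]; exact M.add_mem ha hb

def reductionExp (k l : ℤ) : ℤ := -(l * (k / 2) + k % 2 * (l / 2))

theorem reductionExp_sub_two_left (k l : ℤ) :
    reductionExp (k - 2) l = l + reductionExp k l := by
  have h₁ : (k - 2) % 2 = k % 2 := by omega
  have h₂ : (k - 2) / 2 = k / 2 - 1 := by omega
  rw [reductionExp, reductionExp, h₁, h₂]
  ring

theorem reductionExp_sub_two_right (k l : ℤ) :
    reductionExp k (l - 2) = k + reductionExp k l := by
  have h : (l - 2) / 2 = l / 2 - 1 := by omega
  rw [reductionExp, reductionExp, h]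
  linear_combination Int.emod_add_mul_ediv k 2

section TwistedTraces

local notation "mk" => Submodule.Quotient.mk (p := twistedCommSpace q)

theorem mk_XgenInv_mul_mul_XgenInv (z : QTorus q) : mk (XgenInv q * z * XgenInv q) = mk z :=
  (Submodule.Quotient.eq _).mpr (Submodule.subset_span (Or.inl ⟨z, rfl⟩))

theorem mk_PgenInv_mul_mul_PgenInv (z : QTorus q) : mk (PgenInv q * z * PgenInv q) = mk z :=
  (Submodule.Quotient.eq _).mpr (Submodule.subset_span (Or.inr ⟨z, rfl⟩))

theorem mk_mon_add_two_mul_left (hq : q ≠ 0) (k l n : ℤ) :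
    mk (mon q (k + 2 * n) l) = q ^ (-(l * n)) • mk (mon q k l) := by
  have step (n : ℤ) : mk (mon q (k + 2 * (n + 1)) l) = q ^ (-l) • mk (mon q (k + 2 * n) l) := by
    rw [← mk_XgenInv_mul_mul_XgenInv, XgenInv_mul_mon_mul_XgenInv hq, Submodule.Quotient.mk_smul]
    congr 3
    ring
  rw [eq_zpow_smul_of_add_one (f := fun n => mk (mon q (k + 2 * n) l)) (zpow_ne_zero _ hq) step n,
    ← zpow_mul, mul_zero, add_zero, neg_mul]

theorem mk_mon_add_two_mul_right (hq : q ≠ 0) (k l n : ℤ) :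
    mk (mon q k (l + 2 * n)) = q ^ (-(k * n)) • mk (mon q k l) := by
  have step (n : ℤ) : mk (mon q k (l + 2 * (n + 1))) = q ^ (-k) • mk (mon q k (l + 2 * n)) := by
    rw [← mk_PgenInv_mul_mul_PgenInv, PgenInv_mul_mon_mul_PgenInv hq, Submodule.Quotient.mk_smul]
    congr 3
    ring
  rw [eq_zpow_smul_of_add_one (f := fun n => mk (mon q k (l + 2 * n))) (zpow_ne_zero _ hq) step n,
    ← zpow_mul, mul_zero, add_zero, neg_mul]

theorem mk_mon_eq_smul_mk_mon_emod (hq : q ≠ 0) (k l : ℤ) :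
    mk (mon q k l) = q ^ reductionExp k l • mk (mon q (k % 2) (l % 2)) := by
  conv_lhs => rw [← Int.emod_add_mul_ediv k 2, ← Int.emod_add_mul_ediv l 2]
  rw [mk_mon_add_two_mul_left hq, mk_mon_add_two_mul_right hq, smul_smul, ← zpow_add₀ hq,
    Int.emod_add_mul_ediv, reductionExp]
  congr 2
  ring

theorem span_mk_eq_top (hq : q ≠ 0) :
    Submodule.span ℂ {mk 1, mk (Xgen q), mk (Pgen q), mk (Xgen q * Pgen q)} = ⊤ := by
  rw [eq_top_iff, ← Submodule.range_mkQ, LinearMap.range_eq_map, ← span_range_mon hq,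
    Submodule.map_span_le]
  rintro _ ⟨⟨k, l⟩, rfl⟩
  rw [Submodule.mkQ_apply, mk_mon_eq_smul_mk_mon_emod hq]
  refine Submodule.smul_mem _ _ (Submodule.subset_span ?_)
  rcases Int.emod_two_eq_zero_or_one k with hk | hk <;>
    rcases Int.emod_two_eq_zero_or_one l with hl | hl <;> simp [hk, hl]

end TwistedTraces

variable (q) in
noncomputable def generatorShifts : Fin 4 → Module.End ℂ ((ℤ × ℤ) →₀ ℂ) :=
  ![weightedShift 1 (1, 0), weightedShift 1 (-1, 0),
    weightedShift (fun p => q ^ p.1) (0, 1), weightedShift (fun p => q ^ (-p.1)) (0, -1)]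

theorem lift_generatorShifts_rel (hq : q ≠ 0) ⦃x y : FreeAlgebra ℂ (Fin 4)⦄
    (h : QTRel q x y) :
    FreeAlgebra.lift ℂ (generatorShifts q) x = FreeAlgebra.lift ℂ (generatorShifts q) y := by
  refine Finsupp.lhom_ext fun ⟨k, l⟩ a => ?_
  cases h <;>
    simp only [map_mul, map_one, map_smul, FreeAlgebra.lift_ι_apply, generatorShifts,
      Module.End.mul_apply, Module.End.one_apply, LinearMap.smul_apply, weightedShift_single,
      Prod.mk_add_mk, Finsupp.smul_single, Matrix.cons_val, Pi.one_apply, one_mul, smul_eq_mul,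
      add_zero, neg_add_cancel_right, add_neg_cancel_right, zpow_neg, zpow_add_one₀ hq,
      inv_mul_cancel_left₀ (zpow_ne_zero k hq), mul_inv_cancel_left₀ (zpow_ne_zero k hq),
      mul_comm (q ^ k) q, mul_assoc]

variable (q) in
noncomputable def regularRep (hq : q ≠ 0) :
    QTorus q →ₐ[ℂ] Module.End ℂ ((ℤ × ℤ) →₀ ℂ) :=
  RingQuot.liftAlgHom ℂ
    ⟨FreeAlgebra.lift ℂ (generatorShifts q), lift_generatorShifts_rel hq⟩

theorem regularRep_Xgen (hq : q ≠ 0) : regularRep q hq (Xgen q) = weightedShift 1 (1, 0) := by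
  simp [regularRep, Xgen, generatorShifts]

theorem regularRep_Pgen (hq : q ≠ 0) :
    regularRep q hq (Pgen q) = weightedShift (fun p => q ^ p.1) (0, 1) := by
  simp [regularRep, Pgen, generatorShifts]

theorem regularRep_unit_injective (hq : q ≠ 0) (u : (QTorus q)ˣ) :
    Function.Injective (regularRep q hq u) :=
  ((Module.End.isUnit_iff _).mp (u.isUnit.map (regularRep q hq))).injective

theorem regularRep_mon_single_zero (hq : q ≠ 0) (k l : ℤ) :
    regularRep q hq (mon q k l) (Finsupp.single (0, 0) 1) = Finsupp.single (k, l) 1 := by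
  have hP : (fun l => regularRep q hq (mon q 0 l) (Finsupp.single (0, 0) 1)) =
      fun l => Finsupp.single (0, l) 1 := by
    refine ext_int_of_add_one (regularRep_unit_injective hq (unitP q)) (fun l => ?_) (fun l => ?_)
      (by simp)
    · change regularRep q hq (mon q 0 (l + 1)) _ =
        regularRep q hq (Pgen q) (regularRep q hq (mon q 0 l) _)
      rw [← Module.End.mul_apply, ← map_mul, Pgen_mul_mon hq, zpow_zero, one_smul]
    · change _ = regularRep q hq (Pgen q) _
      simp [regularRep_Pgen, weightedShift_single]
  have hX : (fun k => regularRep q hq (mon q k l) (Finsupp.single (0, 0) 1)) =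
      fun k => Finsupp.single (k, l) 1 := by
    refine ext_int_of_add_one (regularRep_unit_injective hq (unitX q)) (fun k => ?_) (fun k => ?_)
      (congrFun hP l)
    · change regularRep q hq (mon q (k + 1) l) _ =
        regularRep q hq (Xgen q) (regularRep q hq (mon q k l) _)
      rw [← Module.End.mul_apply, ← map_mul, Xgen_mul_mon hq]
    · change _ = regularRep q hq (Xgen q) _
      simp [regularRep_Xgen, weightedShift_single]
  exact congrFun hX k

variable (q) in
noncomputable def traceMap (hq : q ≠ 0) : QTorus q →ₗ[ℂ] (ℤ × ℤ) →₀ ℂ :=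
  Finsupp.linearCombination ℂ
      (fun p : ℤ × ℤ => Finsupp.single (p.1 % 2, p.2 % 2) (q ^ reductionExp p.1 p.2)) ∘ₗ
    LinearMap.applyₗ (Finsupp.single (0, 0) 1) ∘ₗ (regularRep q hq).toLinearMap

theorem traceMap_mon (hq : q ≠ 0) (k l : ℤ) :
    traceMap q hq (mon q k l) = Finsupp.single (k % 2, l % 2) (q ^ reductionExp k l) := by
  simp [traceMap, regularRep_mon_single_zero]

theorem traceMap_mul_mul_eq_of_forall_mon {a : QTorus q} (hq : q ≠ 0)
    (ha : ∀ k l, traceMap q hq (a * mon q k l * a) = traceMap q hq (mon q k l)) (z : QTorus q) :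
    traceMap q hq (a * z * a) = traceMap q hq z := by
  have : traceMap q hq ∘ₗ LinearMap.mulRight ℂ a ∘ₗ LinearMap.mulLeft ℂ a =
      traceMap q hq :=
    LinearMap.ext_on_range (span_range_mon hq) fun p => ha p.1 p.2
  exact LinearMap.congr_fun this z

theorem traceMap_XgenInv_mul_mul_XgenInv (hq : q ≠ 0) (z : QTorus q) :
    traceMap q hq (XgenInv q * z * XgenInv q) = traceMap q hq z := by
  refine traceMap_mul_mul_eq_of_forall_mon hq (fun k l => ?_) z
  have hk : (k - 2) % 2 = k % 2 := by omega
  rw [XgenInv_mul_mon_mul_XgenInv hq, map_smul, traceMap_mon, traceMap_mon, hk,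
    reductionExp_sub_two_left, Finsupp.smul_single, smul_eq_mul, ← zpow_add₀ hq,
    neg_add_cancel_left]

theorem traceMap_PgenInv_mul_mul_PgenInv (hq : q ≠ 0) (z : QTorus q) :
    traceMap q hq (PgenInv q * z * PgenInv q) = traceMap q hq z := by
  refine traceMap_mul_mul_eq_of_forall_mon hq (fun k l => ?_) z
  have hl : (l - 2) % 2 = l % 2 := by omega
  rw [PgenInv_mul_mon_mul_PgenInv hq, map_smul, traceMap_mon, traceMap_mon, hl,
    reductionExp_sub_two_right, Finsupp.smul_single, smul_eq_mul, ← zpow_add₀ hq,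
    neg_add_cancel_left]

theorem twistedCommSpace_le_ker_traceMap (hq : q ≠ 0) :
    twistedCommSpace q ≤ LinearMap.ker (traceMap q hq) := by
  rw [twistedCommSpace, Submodule.span_le]
  rintro _ (⟨z, rfl⟩ | ⟨z, rfl⟩) <;>
    simp [traceMap_XgenInv_mul_mul_XgenInv, traceMap_PgenInv_mul_mul_PgenInv]

end QTorus

theorem quantum_torus_twisted_HH0_general (q : ℂ) (hq : q ≠ 0) :
    (Submodule.span ℂ
        {x : QTorus q ⧸ twistedCommSpace q |
          x = Submodule.Quotient.mk (1 : QTorus q) ∨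
          x = Submodule.Quotient.mk (Xgen q) ∨
          x = Submodule.Quotient.mk (Pgen q) ∨
          x = Submodule.Quotient.mk (Xgen q * Pgen q)} = ⊤) ∧
    LinearIndependent ℂ
      ![(Submodule.Quotient.mk (1 : QTorus q) : QTorus q ⧸ twistedCommSpace q),
        Submodule.Quotient.mk (Xgen q),
        Submodule.Quotient.mk (Pgen q),
        Submodule.Quotient.mk (Xgen q * Pgen q)] := by
  refine ⟨QTorus.span_mk_eq_top hq, ?_⟩
  set Φ := (twistedCommSpace q).liftQ _ (QTorus.twistedCommSpace_le_ker_traceMap hq)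
  have hΦ : Φ ∘ ![Submodule.Quotient.mk 1, Submodule.Quotient.mk (Xgen q),
      Submodule.Quotient.mk (Pgen q), Submodule.Quotient.mk (Xgen q * Pgen q)] =
      Finsupp.basisSingleOne ∘ ![((0 : ℤ), (0 : ℤ)), (1, 0), (0, 1), (1, 1)] := by
    funext i
    fin_cases i
    · simpa [Φ, QTorus.reductionExp] using QTorus.traceMap_mon hq 0 0
    · simpa [Φ, QTorus.reductionExp] using QTorus.traceMap_mon hq 1 0
    · simpa [Φ, QTorus.reductionExp] using QTorus.traceMap_mon hq 0 1
    · simpa [Φ, QTorus.reductionExp] using QTorus.traceMap_mon hq 1 1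
  refine LinearIndependent.of_comp Φ ?_
  rw [hΦ]
  exact Finsupp.basisSingleOne.linearIndependent.comp _ (by decide)

/-- For `q` not a root of unity, the twisted trace space
`HH₀(D_q, sD_q) = D_q / span{s(a)b - ba}` is 4-dimensional, spanned by the classes of
the monomials `X^{ε₁}P^{ε₂}`, `ε₁, ε₂ ∈ {0,1}`: the classes of `1, X, P, XP` span the
quotient and are linearly independent. -/
theorem quantum_torus_twisted_HH0 (q : ℂ) (hq : q ≠ 0)
    (hroot : ∀ n : ℕ, 0 < n → q ^ n ≠ 1) :
    (Submodule.span ℂ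
        {x : QTorus q ⧸ twistedCommSpace q |
          x = Submodule.Quotient.mk (1 : QTorus q) ∨
          x = Submodule.Quotient.mk (Xgen q) ∨
          x = Submodule.Quotient.mk (Pgen q) ∨
          x = Submodule.Quotient.mk (Xgen q * Pgen q)} = ⊤) ∧
    LinearIndependent ℂ
      ![(Submodule.Quotient.mk (1 : QTorus q) : QTorus q ⧸ twistedCommSpace q),
        Submodule.Quotient.mk (Xgen q),
        Submodule.Quotient.mk (Pgen q),
        Submodule.Quotient.mk (Xgen q * Pgen q)] :=
  quantum_torus_twisted_HH0_general q hq
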